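/- Leaf-join correctness: Let P' be a pattern with rightmost vertex u, v a single-vertex pattern, and P = RExtend(P', v, u). Then the map sending an embedding φ of P into database tree T to the pair (φ restricted to V(P'), φ(v)) is a bijection between embeddings of P into T and pairs (φ', x) where φ' is an embedding of P' into T, x is a vertex of T with label λ(v), p(φ'(u)) < p(x), and x.scope.u ≤ φ'(u).scope.u (i.e., x is a descendant of φ'(u)). -/

import Mathlib

open scoped Classical

/-- A rooted tree on vertices `Fin (n+1)`, given by its parent function.
The preorder numbering is the identity (this is imposed by `IsValid`). -/
structure PTree (n : ℕ) where
  parent : Fin (n + 1) → Fin (n + 1)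

namespace PTree

variable {n : ℕ}

/-- `t.Anc u v` : `u` is a proper ancestor of `v`. -/
def Anc (t : PTree n) : Fin (n + 1) → Fin (n + 1) → Prop :=
  Relation.TransGen (fun a b => a = t.parent b ∧ a ≠ b)

/-- The set of descendants of `v`, including `v` itself (the subtree rooted at `v`). -/
noncomputable def descSet (t : PTree n) (v : Fin (n + 1)) : Finset (Fin (n + 1)) :=
  Finset.univ.filter fun w => w = v ∨ t.Anc v w

/-- The number of vertices in the subtree rooted at `v`. -/
noncomputable def size (t : PTree n) (v : Fin (n + 1)) : ℕ := (t.descSet v).card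

/-- The preorder number of the rightmost (last in preorder) descendant of `v`. -/
noncomputable def scopeU (t : PTree n) (v : Fin (n + 1)) : ℕ :=
  (t.descSet v).sup fun w => (w : ℕ)

/-- The scope of a vertex: lower bound is its preorder number, upper bound the
preorder number of its rightmost descendant. -/
noncomputable def scope (t : PTree n) (v : Fin (n + 1)) : ℕ × ℕ :=
  ((v : ℕ), t.scopeU v)

/-- `t` is a rooted tree whose preorder numbering is the identity:
vertex `0` is the root, parents come strictly earlier, and the parent of the
next vertex in preorder is the previous vertex or one of its ancestors. -/
def IsValid (t : PTree n) : Prop :=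
  t.parent 0 = 0 ∧
  (∀ v : Fin (n + 1), v ≠ 0 → t.parent v < v) ∧
  (∀ (v : Fin (n + 1)) (h : (v : ℕ) + 1 < n + 1),
    t.parent ⟨(v : ℕ) + 1, h⟩ = v ∨ t.Anc (t.parent ⟨(v : ℕ) + 1, h⟩) v)

/-- `v` lies on the rightmost path of `t` (the path from the root to the last
vertex in preorder). -/
def OnRMP (t : PTree n) (v : Fin (n + 1)) : Prop :=
  v = Fin.last n ∨ t.Anc v (Fin.last n)

/-- Rightmost path extension: attach a new vertex (the new last vertex in
preorder) as the rightmost child of `u`. -/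
def extendP (t : PTree n) (u : Fin (n + 1)) : PTree (n + 1) where
  parent v := if h : (v : ℕ) < n + 1 then (t.parent ⟨(v : ℕ), h⟩).castSucc else u.castSucc

end PTree

/-- A rooted ordered labeled tree. -/
structure LTree (n : ℕ) extends PTree n where
  label : Fin (n + 1) → ℕ

namespace LTree

variable {m n : ℕ}

def IsValid (t : LTree n) : Prop := t.toPTree.IsValid

/-- Subtree homeomorphism (embedding) of a pattern `P` into a database tree `T`:
injective, preorder-order preserving (preorder numbers being the identity),
label preserving, and mapping each edge to an ancestor-descendant pair. -/
def IsEmb (P : LTree m) (T : LTree n) (φ : Fin (m + 1) → Fin (n + 1)) : Prop :=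
  StrictMono φ ∧ (∀ v, T.label (φ v) = P.label v) ∧
  (∀ v : Fin (m + 1), v ≠ 0 → T.toPTree.Anc (φ (P.parent v)) (φ v))

/-- Rightmost path extension of a labeled tree: the new vertex gets label `a`. -/
def extendL (t : LTree m) (u : Fin (m + 1)) (a : ℕ) : LTree (m + 1) where
  toPTree := t.toPTree.extendP u
  label v := if h : (v : ℕ) < m + 1 then t.label ⟨(v : ℕ), h⟩ else a

end LTree

/-- Extension of an embedding: the new (last) pattern vertex is mapped to `x`. -/
def extendMap {m n : ℕ} (φ : Fin (m + 1) → Fin (n + 1)) (x : Fin (n + 1)) :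
    Fin (m + 2) → Fin (n + 1) :=
  fun v => if h : (v : ℕ) < m + 1 then φ ⟨(v : ℕ), h⟩ else x

/-- `RExtend(OT', x, y)` (with `y = φ' u`) is an occurrence tree in `T`, i.e. the
extended map is an embedding of the rightmost path extension of `P'` (whose new
vertex carries the label of `x`). -/
def ExtIsOccTree {m n : ℕ} (P' : LTree m) (T : LTree n)
    (φ' : Fin (m + 1) → Fin (n + 1)) (u : Fin (m + 1)) (x : Fin (n + 1)) : Prop :=
  LTree.IsEmb (P'.extendL u (T.label x)) T (extendMap φ' x)

/-!
Restricting to `V(P')` and extending by `Fin.snoc` are mutually inverse, and `Fin.snoc φ' x`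
embeds `P` exactly when `φ'` embeds `P'`, `x` carries the label `a`, comes after `φ' u` in
preorder and descends from it. Descent is read off scopes because, with the identity as
preorder numbering, every subtree is an interval: the vertex just before a proper descendant of
`y` is again in the subtree of `y`, so the subtree of `y` is `[y, scopeU y]`.
-/

namespace PTree

variable {n : ℕ} {t : PTree n}

lemma parent_lt_of_ne (ht : t.IsValid) {v : Fin (n + 1)} (h : t.parent v ≠ v) :
    t.parent v < v := by
  rcases eq_or_ne v 0 with rfl | hv
  · exact absurd ht.1 h
  · exact ht.2.1 v hv

lemma Anc.lt (ht : t.IsValid) {a b : Fin (n + 1)} (h : t.Anc a b) : a < b := by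
  induction h with
  | single hab => exact hab.1 ▸ parent_lt_of_ne ht (hab.1 ▸ hab.2)
  | tail _ hbc ih => exact ih.trans (hbc.1 ▸ parent_lt_of_ne ht (hbc.1 ▸ hbc.2))

lemma Anc.eq_parent_or_anc_parent {a b : Fin (n + 1)} (h : t.Anc a b) :
    a = t.parent b ∨ t.Anc a (t.parent b) := by
  cases h with
  | single hab => exact Or.inl hab.1
  | tail hac hcb => exact Or.inr (hcb.1 ▸ hac)

lemma mem_descSet {y x : Fin (n + 1)} : x ∈ t.descSet y ↔ x = y ∨ t.Anc y x := by
  simp [descSet]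

lemma mem_descSet_of_anc {y x : Fin (n + 1)} (h : t.Anc y x) : x ∈ t.descSet y :=
  mem_descSet.2 (Or.inr h)

lemma self_mem_descSet (y : Fin (n + 1)) : y ∈ t.descSet y :=
  mem_descSet.2 (Or.inl rfl)

/-- Validity makes `t.parent w` equal to, or an ancestor of, the preorder predecessor `w'`. -/
lemma mem_descSet_of_succ {y w w' : Fin (n + 1)} (ht : t.IsValid) (hyw : t.Anc y w)
    (hw' : (w' : ℕ) + 1 = w) : w' ∈ t.descSet y := by
  obtain ⟨hsucc, hpw⟩ : ∃ h : (w' : ℕ) + 1 < n + 1, (⟨(w' : ℕ) + 1, h⟩ : Fin (n + 1)) = w :=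
    ⟨hw' ▸ w.isLt, Fin.ext hw'⟩
  have hpar := ht.2.2 w' hsucc
  rw [hpw] at hpar
  rcases hyw.eq_parent_or_anc_parent with rfl | hy <;> rcases hpar with hp | hp
  · exact hp ▸ self_mem_descSet _
  · exact mem_descSet_of_anc hp
  · exact mem_descSet_of_anc (hp ▸ hy)
  · exact mem_descSet_of_anc (hy.trans hp)

lemma mem_descSet_of_le_of_le {y x w : Fin (n + 1)} (ht : t.IsValid) (hw : w ∈ t.descSet y)
    (hyx : y ≤ x) (hxw : x ≤ w) : x ∈ t.descSet y := by
  obtain ⟨k, hk⟩ : ∃ k, (w : ℕ) = x + k := ⟨w - x, by omega⟩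
  induction k generalizing w with
  | zero => rwa [show x = w from Fin.ext (by omega)]
  | succ k ih =>
    have hyw : t.Anc y w := by
      rcases mem_descSet.1 hw with rfl | h
      · exact absurd hyx (not_le.2 (Fin.lt_def.2 (by omega)))
      · exact h
    exact ih (w := ⟨x + k, by omega⟩) (mem_descSet_of_succ ht hyw (by simp only; omega))
      (Fin.le_def.2 (Nat.le_add_right _ _)) rfl

lemma anc_iff_lt_and_scopeU_le (ht : t.IsValid) {y x : Fin (n + 1)} :
    t.Anc y x ↔ y < x ∧ t.scopeU x ≤ t.scopeU y := by
  refine ⟨fun h => ⟨h.lt ht, Finset.sup_mono fun w hw => ?_⟩, fun ⟨hyx, hsc⟩ => ?_⟩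
  · rcases mem_descSet.1 hw with rfl | hxw
    exacts [mem_descSet_of_anc h, mem_descSet_of_anc (h.trans hxw)]
  · obtain ⟨w, hw, hsup⟩ :=
      Finset.exists_mem_eq_sup (t.descSet y) ⟨y, self_mem_descSet y⟩ fun w => (w : ℕ)
    have hxw : (x : ℕ) ≤ w :=
      calc (x : ℕ) ≤ t.scopeU x := Finset.le_sup (f := fun w : Fin (n + 1) => (w : ℕ))
            (self_mem_descSet x)
        _ ≤ t.scopeU y := hsc
        _ = w := hsup
    rcases mem_descSet.1 (mem_descSet_of_le_of_le ht hw hyx.le (Fin.le_def.2 hxw)) with h | h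
    exacts [absurd h hyx.ne', h]

end PTree

namespace LTree

variable {m n : ℕ}

@[simp]
lemma extendL_parent_castSucc (t : LTree m) (u : Fin (m + 1)) (a : ℕ) (v : Fin (m + 1)) :
    (t.extendL u a).parent v.castSucc = (t.parent v).castSucc := by
  simp [extendL, PTree.extendP, not_lt.2 v.is_le]

@[simp]
lemma extendL_parent_last (t : LTree m) (u : Fin (m + 1)) (a : ℕ) :
    (t.extendL u a).parent (Fin.last (m + 1)) = u.castSucc := by
  simp [extendL, PTree.extendP]

@[simp]
lemma extendL_label_castSucc (t : LTree m) (u : Fin (m + 1)) (a : ℕ) (v : Fin (m + 1)) :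
    (t.extendL u a).label v.castSucc = t.label v := by
  simp [extendL, not_lt.2 v.is_le]

@[simp]
lemma extendL_label_last (t : LTree m) (u : Fin (m + 1)) (a : ℕ) :
    (t.extendL u a).label (Fin.last (m + 1)) = a := by
  simp [extendL]

end LTree

lemma Fin.strictMono_snoc_iff {α : Type*} [Preorder α] {m : ℕ} {φ : Fin (m + 1) → α} {x : α} :
    StrictMono (Fin.snoc φ x : Fin (m + 2) → α) ↔ StrictMono φ ∧ φ (Fin.last m) < x := by
  rw [Fin.strictMono_iff_lt_succ, Fin.forall_fin_succ', Fin.strictMono_iff_lt_succ]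
  simp only [Fin.succ_castSucc, Fin.snoc_castSucc, Fin.succ_last, Fin.snoc_last]

lemma LTree.isEmb_extendL_snoc_iff {m n : ℕ} (P : LTree m) (T : LTree n) (u : Fin (m + 1))
    (a : ℕ) (φ : Fin (m + 1) → Fin (n + 1)) (x : Fin (n + 1)) :
    (P.extendL u a).IsEmb T (Fin.snoc φ x) ↔
      P.IsEmb T φ ∧ φ (Fin.last m) < x ∧ T.label x = a ∧ T.Anc (φ u) x := by
  simp only [IsEmb, Fin.strictMono_snoc_iff, Fin.forall_fin_succ' (n := m + 1),
    Fin.castSucc_ne_zero_iff, extendL_parent_castSucc, extendL_parent_last,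
    extendL_label_castSucc, extendL_label_last, Fin.snoc_castSucc, Fin.snoc_last]
  simp only [ne_eq, Fin.last_pos'.ne', not_false_eq_true, forall_const]
  tauto

theorem stmt18_general {m n : ℕ} (P' : LTree m) (T : LTree n)
    (hT : T.IsValid) (a : ℕ) :
    Set.BijOn
      (fun φ : Fin (m + 2) → Fin (n + 1) =>
        ((fun w : Fin (m + 1) => φ w.castSucc), φ (Fin.last (m + 1))))
      {φ | LTree.IsEmb (P'.extendL (Fin.last m) a) T φ}
      {p : (Fin (m + 1) → Fin (n + 1)) × Fin (n + 1) |
        LTree.IsEmb P' T p.1 ∧ T.label p.2 = a ∧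
        (p.1 (Fin.last m) : ℕ) < (p.2 : ℕ) ∧
        T.toPTree.scopeU p.2 ≤ T.toPTree.scopeU (p.1 (Fin.last m))} := by
  have hEmb := LTree.isEmb_extendL_snoc_iff P' T (Fin.last m) a
  refine Set.InvOn.bijOn (f' := fun p => Fin.snoc p.1 p.2)
    ⟨fun φ _ => Fin.snoc_init_self φ, fun p _ => by simp⟩ ?_ ?_
  · intro φ hφ
    rw [Set.mem_ofPred_eq, ← Fin.snoc_init_self φ, hEmb, PTree.anc_iff_lt_and_scopeU_le hT] at hφ
    obtain ⟨hφ', -, hlabel, hlt, hscope⟩ := hφ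
    exact ⟨hφ', hlabel, hlt, hscope⟩
  · rintro ⟨φ', x⟩ ⟨hφ', hlabel, hlt, hscope⟩
    exact (hEmb φ' x).2 ⟨hφ', hlt, hlabel, (PTree.anc_iff_lt_and_scopeU_le hT).2 ⟨hlt, hscope⟩⟩

/-- Leaf-join correctness (Proposition 5 at the level of embeddings): for
`P = RExtend(P', v, u)` with `u` the rightmost vertex of `P'` and `v` a new
vertex labeled `a`, the map `φ ↦ (φ|V(P'), φ(v))` is a bijection between the
embeddings of `P` into `T` and the pairs `(φ', x)` where `φ'` embeds `P'` into
`T`, `x` has label `a`, `p(φ'(u)) < p(x)`, and `x.scope.u ≤ φ'(u).scope.u`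
(i.e. `x` is a descendant of `φ'(u)`). -/
theorem stmt18 {m n : ℕ} (P' : LTree m) (T : LTree n) (hP : P'.IsValid)
    (hT : T.IsValid) (a : ℕ) :
    Set.BijOn
      (fun φ : Fin (m + 2) → Fin (n + 1) =>
        ((fun w : Fin (m + 1) => φ w.castSucc), φ (Fin.last (m + 1))))
      {φ | LTree.IsEmb (P'.extendL (Fin.last m) a) T φ}
      {p : (Fin (m + 1) → Fin (n + 1)) × Fin (n + 1) |
        LTree.IsEmb P' T p.1 ∧ T.label p.2 = a ∧
        (p.1 (Fin.last m) : ℕ) < (p.2 : ℕ) ∧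
        T.toPTree.scopeU p.2 ≤ T.toPTree.scopeU (p.1 (Fin.last m))} :=
  stmt18_general P' T hT a
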